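/- arXiv:math/9504220 — 2 statements merged into one kernel-verified Lean document; each statement's English description precedes it below -/
import Mathlib

section
/- For every ordinal ε < ω₁, the set D¹_ε = {p ∈ ℙ : α_p ≥ ε} is an open dense subset of ℙ (dense: for every p ∈ ℙ there is q ∈ D¹_ε with q ≤ p; open: if p ∈ D¹_ε and q ≤ p then q ∈ D¹_ε). -/
namespace JinShelah563

open Cardinal Set

/-- We work with ordinals in the lowest universe. -/
abbrev ONat := Ordinal.{0}

/-- A node of the big tree `ω₁^{<ω₁}` is coded by the graph of a function from an
initial segment of the ordinals into the ordinals. -/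
abbrev Node := Set (ONat × ONat)

/-- The first uncountable ordinal. -/
noncomputable def ω1 : ONat := (Cardinal.aleph 1).ord

/-- The restriction (initial segment) of a node to level `β`. -/
def nodeRestrict (x : Node) (β : ONat) : Node := {z ∈ x | z.1 < β}

/-- `x` is the graph of a function from a countable ordinal `β` into `ω₁`. -/
def IsNode (x : Node) : Prop :=
  (∀ z ∈ x, z.2 < ω1) ∧
  (∀ z ∈ x, ∀ w ∈ x, z.1 = w.1 → z.2 = w.2) ∧
  ∃ β, β < ω1 ∧ Prod.fst '' x = Set.Iio β

/-- The height (= domain) of a node. -/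
noncomputable def nodeHt (x : Node) : ONat := sInf {β | Prod.fst '' x = Set.Iio β}

/-- A subtree of `ω₁^{<ω₁}`: a set of nodes closed under initial segments (the tree
order is extension, i.e. `⊆` of graphs). -/
def IsTree (t : Set Node) : Prop :=
  (∀ x ∈ t, IsNode x) ∧ ∀ x ∈ t, ∀ β : ONat, nodeRestrict x β ∈ t

/-- The `α`-th level of a tree. -/
def level (t : Set Node) (α : ONat) : Set Node := {x ∈ t | nodeHt x = α}

/-- The height of a tree: the least `α` whose level is empty. -/
noncomputable def treeHt (t : Set Node) : ONat := sInf {α | level t α = ∅}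

/-- `t↾α`, the set of nodes of `t` of height `< α`. -/
def restrictTree (t : Set Node) (α : ONat) : Set Node := {x ∈ t | nodeHt x < α}

/-- `t ≤_end t'` : `t'` end-extends `t`, i.e. `t'↾ht(t) = t`. -/
def EndExtends (t t' : Set Node) : Prop := restrictTree t' (treeHt t) = t

/-- A normal tree: (i) every node extends to every higher nonempty level;
(ii) every node of a non-top level has two distinct extensions at a common level. -/
def IsNormalTree (t : Set Node) : Prop :=
  (∀ α β : ONat, α < β → β < treeHt t → ∀ x ∈ level t α, ∃ y ∈ level t β, x ⊆ y) ∧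
  (∀ α : ONat, α + 1 < treeHt t → ∀ x ∈ level t α,
    ∃ β, β < treeHt t ∧ ∃ y₁ ∈ level t β, ∃ y₂ ∈ level t β, y₁ ≠ y₂ ∧ x ⊂ y₁ ∧ x ⊂ y₂)

/-- `𝒯`: the countable normal trees. -/
def CNTree (t : Set Node) : Prop := IsTree t ∧ t.Countable ∧ IsNormalTree t

/-- `g` is the graph of a function with domain `dom`. -/
def IsFunGraph {A B : Type*} (g : Set (A × B)) (dom : Set A) : Prop :=
  (∀ z ∈ g, z.1 ∈ dom) ∧ ∀ a ∈ dom, ∃! y, (a, y) ∈ g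

/-- The raw data of a condition `p = ⟨α_p, t_p, k_p, U_p, B_p, F_p⟩` of the forcing `ℙ`.
`B_p = {b γ : γ ∈ U}` (with `β γ = β^p_γ`) and `F_p = {f γ : γ ∈ U}` (with
`δ γ = δ^p_γ`); `b γ` and `f γ` are coded as graphs of functions. -/
structure Cond where
  α : ONat
  t : Set Node
  k : Node → Set Node
  U : Set ONat
  b : ONat → Set (Node × Node)
  β : ONat → ONat
  f : ONat → Set (ONat × ONat)
  δ : ONat → ONat

/-- Membership in the forcing notion `ℙ` (relative to the inaccessible `κ`):
clauses (a)–(g) of the definition. -/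
def IsCond (κ : Cardinal.{0}) (p : Cond) : Prop :=
  -- (a)
  p.α < ω1 ∧
  -- (b)
  CNTree p.t ∧ treeHt p.t = p.α + 1 ∧
  -- (c)
  (∀ x ∈ p.t, CNTree (p.k x) ∧ treeHt (p.k x) = nodeHt x + 1) ∧
  (∀ x ∈ p.t, ∀ y ∈ p.t, x ⊂ y → EndExtends (p.k x) (p.k y)) ∧
  -- (d)
  (∀ γ ∈ p.U, γ < κ.ord) ∧ Cardinal.mk p.U ≤ Cardinal.aleph 1 ∧
  -- (e)
  (∀ γ ∈ p.U,
    p.β γ ≤ p.α ∧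
    IsFunGraph (p.b γ) (restrictTree p.t (p.β γ + 1)) ∧
    (∀ x y, (x, y) ∈ p.b γ → y ∈ level (p.k x) (nodeHt x)) ∧
    (∀ x y x' y', (x, y) ∈ p.b γ → (x', y') ∈ p.b γ → x ⊆ x' → y ⊆ y')) ∧
  -- (f)
  (∀ γ ∈ p.U,
    p.δ γ ≤ p.α ∧
    IsFunGraph (p.f γ) (Set.Iio (p.δ γ)) ∧
    ∀ z ∈ p.f γ, z.2 < γ) ∧
  -- (g)
  (∀ x ∈ restrictTree p.t p.α, ∀ U₀ : Set ONat, U₀ ⊆ p.U → U₀.Finite →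
    ∀ ε : ONat, nodeHt x < ε → ε ≤ p.α →
    ∃ x' ∈ level p.t ε, x ⊂ x' ∧
      ∀ γ₁ ∈ U₀, ∀ γ₂ ∈ U₀,
        p.β γ₁ < ε ∨ p.β γ₂ < ε ∨
        ∀ y₁ y₂ y₁' y₂', (x, y₁) ∈ p.b γ₁ → (x, y₂) ∈ p.b γ₂ →
          (x', y₁') ∈ p.b γ₁ → (x', y₂') ∈ p.b γ₂ → y₁ = y₂ → y₁' = y₂')

/-- The order of `ℙ`: `le p q` means `p ≤ q`, i.e. `p` is a stronger condition. -/
def le (p q : Cond) : Prop :=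
  -- (1)
  q.α ≤ p.α ∧ EndExtends q.t p.t ∧ (∀ x ∈ q.t, p.k x = q.k x) ∧ q.U ⊆ p.U ∧
  -- (2)
  (∀ γ ∈ q.U, q.b γ ⊆ p.b γ ∧ q.f γ ⊆ p.f γ) ∧
  -- (3)
  {γ | γ ∈ q.U ∧ q.β γ < p.β γ}.Countable ∧
  -- (4)
  {γ | γ ∈ q.U ∧ q.δ γ < p.δ γ}.Countable

section Basics

lemma iio_inj {a b : ONat} (h : Set.Iio a = Set.Iio b) : a = b := by
  by_contra hne
  rcases lt_or_gt_of_ne hne with hl | hl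
  · have h1 : a ∈ Set.Iio b := Set.mem_Iio.2 hl
    rw [← h] at h1
    exact lt_irrefl a h1
  · have h1 : b ∈ Set.Iio a := Set.mem_Iio.2 hl
    rw [h] at h1
    exact lt_irrefl b h1

lemma nodeHt_eq {x : Node} {β : ONat} (h : Prod.fst '' x = Set.Iio β) : nodeHt x = β := by
  have : {β' | Prod.fst '' x = Set.Iio β'} = {β} := by
    ext β'; simp only [Set.mem_setOf_eq, Set.mem_singleton_iff]
    constructor
    · intro h'; exact iio_inj (h' ▸ h).symm |>.symm ▸ rfl
    · rintro rfl; exact h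
  rw [nodeHt, this, csInf_singleton]

lemma IsNode.fst_image {x : Node} (h : IsNode x) : Prod.fst '' x = Set.Iio (nodeHt x) := by
  obtain ⟨β, -, hβ⟩ := h.2.2
  rw [nodeHt_eq hβ, hβ]

lemma IsNode.ht_lt_omega1 {x : Node} (h : IsNode x) : nodeHt x < ω1 := by
  obtain ⟨β, hβω, hβ⟩ := h.2.2
  rw [nodeHt_eq hβ]; exact hβω

lemma IsNode.fst_lt {x : Node} (h : IsNode x) {z : ONat × ONat} (hz : z ∈ x) :
    z.1 < nodeHt x := by
  have : z.1 ∈ Prod.fst '' x := ⟨z, hz, rfl⟩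
  rwa [h.fst_image] at this

lemma IsNode.exists_mem {x : Node} (h : IsNode x) {β : ONat} (hβ : β < nodeHt x) :
    ∃ v, (β, v) ∈ x := by
  have : β ∈ Prod.fst '' x := by rw [h.fst_image]; exact hβ
  obtain ⟨z, hz, hz1⟩ := this
  exact ⟨z.2, by rwa [← hz1, Prod.mk.eta]⟩

lemma nodeRestrict_subset (x : Node) (β : ONat) : nodeRestrict x β ⊆ x := fun z hz => hz.1

lemma nodeRestrict_eq_self {x : Node} (h : IsNode x) {β : ONat} (hβ : nodeHt x ≤ β) :
    nodeRestrict x β = x := by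
  ext z; constructor
  · exact fun hz => hz.1
  · exact fun hz => ⟨hz, lt_of_lt_of_le (h.fst_lt hz) hβ⟩

lemma nodeRestrict_isNode {x : Node} (h : IsNode x) {β : ONat} (hβ : β ≤ nodeHt x) :
    IsNode (nodeRestrict x β) ∧ nodeHt (nodeRestrict x β) = β := by
  have himg : Prod.fst '' nodeRestrict x β = Set.Iio β := by
    ext a; constructor
    · rintro ⟨z, ⟨hz, hzlt⟩, rfl⟩; exact hzlt
    · intro ha
      obtain ⟨v, hv⟩ := h.exists_mem (lt_of_lt_of_le ha hβ)
      exact ⟨(a, v), ⟨hv, ha⟩, rfl⟩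
  have hn : IsNode (nodeRestrict x β) := by
    refine ⟨fun z hz => h.1 z hz.1, fun z hz w hw => h.2.1 z hz.1 w hw.1, β, lt_of_le_of_lt hβ h.ht_lt_omega1, himg⟩
  exact ⟨hn, nodeHt_eq himg⟩

lemma node_subset_eq_restrict {x y : Node} (hx : IsNode x) (hy : IsNode y) (hxy : x ⊆ y) :
    x = nodeRestrict y (nodeHt x) ∧ nodeHt x ≤ nodeHt y := by
  have hle : nodeHt x ≤ nodeHt y := by
    have : Set.Iio (nodeHt x) ⊆ Set.Iio (nodeHt y) := by
      rw [← hx.fst_image, ← hy.fst_image]; exact Set.image_mono hxy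
    by_contra hlt
    have := this (Set.mem_Iio.2 (lt_of_not_ge hlt))
    exact lt_irrefl _ (Set.mem_Iio.1 this)
  constructor
  · ext z; constructor
    · intro hz; exact ⟨hxy hz, hx.fst_lt hz⟩
    · rintro ⟨hz, hzlt⟩
      obtain ⟨v, hv⟩ := hx.exists_mem hzlt
      have := hy.2.1 z hz (z.1, v) (hxy hv) rfl
      rw [← Prod.mk.eta (p := z), this]; exact hv
  · exact hle

lemma node_subset_ht_eq {x y : Node} (hx : IsNode x) (hy : IsNode y) (hxy : x ⊆ y)
    (hht : nodeHt y ≤ nodeHt x) : x = y := by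
  obtain ⟨he, hle⟩ := node_subset_eq_restrict hx hy hxy
  rw [he, le_antisymm hle hht, nodeRestrict_eq_self hy le_rfl]

end Basics
section Trees

lemma mem_level_self {t : Set Node} {x : Node} (hx : x ∈ t) : x ∈ level t (nodeHt x) :=
  ⟨hx, rfl⟩

lemma treeHt_eq_succ {t : Set Node} {e : ONat}
    (h1 : ∀ γ, γ ≤ e → (level t γ).Nonempty) (h2 : level t (e + 1) = ∅) :
    treeHt t = e + 1 := by
  rw [treeHt]
  apply le_antisymm
  · exact csInf_le' h2
  · apply le_csInf ⟨e + 1, h2⟩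
    intro b hb
    by_contra hlt
    have hble : b ≤ e := by
      have := lt_of_not_ge hlt
      rwa [Ordinal.add_one_eq_succ, Order.lt_succ_iff] at this
    obtain ⟨x, hx⟩ := h1 b hble
    rw [Set.mem_setOf_eq] at hb
    rw [hb] at hx
    exact hx

lemma level_treeHt_empty {t : Set Node} {e : ONat} (h : treeHt t = e + 1) :
    level t (e + 1) = ∅ := by
  have hne : {α | level t α = ∅}.Nonempty := by
    by_contra hemp
    rw [Set.not_nonempty_iff_eq_empty] at hemp
    rw [treeHt, hemp] at h
    simp at h
    exact (Ordinal.succ_ne_zero e) h.symm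
  have := csInf_mem hne
  rwa [← treeHt, h] at this

lemma level_nonempty_of_le {t : Set Node} {e : ONat} (h : treeHt t = e + 1)
    {γ : ONat} (hγ : γ ≤ e) : (level t γ).Nonempty := by
  by_contra hemp
  rw [Set.not_nonempty_iff_eq_empty] at hemp
  have : treeHt t ≤ γ := csInf_le' hemp
  rw [h] at this
  exact absurd (lt_of_le_of_lt this ((by rw [Ordinal.add_one_eq_succ]; exact Order.lt_succ_of_le hγ : γ < e + 1))) (lt_irrefl _)

lemma ht_le_of_mem {t : Set Node} {e : ONat} (ht : IsTree t) (h : treeHt t = e + 1)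
    {x : Node} (hx : x ∈ t) : nodeHt x ≤ e := by
  by_contra hlt
  have hlt := lt_of_not_ge hlt
  have hee : e + 1 ≤ nodeHt x := by rw [Ordinal.add_one_eq_succ]; exact Order.succ_le_of_lt hlt
  have hxn := ht.1 x hx
  have hr := ht.2 x hx (e + 1)
  obtain ⟨hrn, hrht⟩ := nodeRestrict_isNode hxn hee
  have : nodeRestrict x (e + 1) ∈ level t (e + 1) := ⟨hr, hrht⟩
  rw [level_treeHt_empty h] at this
  exact this

lemma restrictTree_treeHt {t : Set Node} {e : ONat} (ht : IsTree t) (h : treeHt t = e + 1) :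
    restrictTree t (e + 1) = t := by
  ext x; constructor
  · exact fun hx => hx.1
  · exact fun hx => ⟨hx, (by rw [Ordinal.add_one_eq_succ]; exact Order.lt_succ_of_le (ht_le_of_mem ht h hx) : nodeHt x < e + 1)⟩

lemma restrictTree_restrictTree {t : Set Node} {c d : ONat} (h : d ≤ c) :
    restrictTree (restrictTree t c) d = restrictTree t d := by
  ext x
  constructor
  · rintro ⟨⟨hx, -⟩, hd⟩; exact ⟨hx, hd⟩
  · rintro ⟨hx, hd⟩; exact ⟨⟨hx, lt_of_lt_of_le hd h⟩, hd⟩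

lemma one_lt_omega1 : (1 : ONat) < ω1 := by
  rw [ω1, Cardinal.lt_ord]
  simp only [Ordinal.card_one]
  exact lt_of_lt_of_le Cardinal.one_lt_aleph0 (Cardinal.aleph0_le_aleph 1)

lemma zero_lt_omega1 : (0 : ONat) < ω1 := lt_trans zero_lt_one one_lt_omega1

lemma countable_Iio {β : ONat} (hβ : β < ω1) : (Set.Iio β).Countable := by
  rw [Cardinal.countable_iff_lt_aleph_one, Ordinal.mk_Iio_ordinal]
  have h2 : (Cardinal.aleph.{1} 1) = Cardinal.lift.{1} (Cardinal.aleph.{0} 1) := by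
    rw [Cardinal.lift_aleph]
    norm_num
  rw [h2, Cardinal.lift_lt, ← Cardinal.lt_ord]
  exact hβ

lemma add_one_lt_omega1 {e : ONat} (he : e < ω1) : e + 1 < ω1 := by
  rw [Ordinal.add_one_eq_succ]
  exact (Cardinal.isSuccLimit_ord (Cardinal.aleph0_le_aleph 1)).succ_lt he

end Trees
section Pad
open scoped Classical

/-- The "padding" node fragment on `[a, γ)`: value `1` on `F`, `0` elsewhere. -/
def padNode (a γ : ONat) (F : Set ONat) : Node :=
  (fun i => (i, if i ∈ F then (1 : ONat) else 0)) '' Set.Ico a γ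

lemma mem_padNode {a γ : ONat} {F : Set ONat} {z : ONat × ONat} :
    z ∈ padNode a γ F ↔ z.1 ∈ Set.Ico a γ ∧ z.2 = if z.1 ∈ F then (1 : ONat) else 0 := by
  constructor
  · rintro ⟨i, hi, rfl⟩; exact ⟨hi, rfl⟩
  · rintro ⟨h1, h2⟩
    refine ⟨z.1, h1, ?_⟩
    show (z.1, if z.1 ∈ F then (1:ONat) else 0) = z
    rw [← h2]

lemma padNode_mono {a γ γ' : ONat} (F : Set ONat) (h : γ ≤ γ') :
    padNode a γ F ⊆ padNode a γ' F :=
  Set.image_mono (Set.Ico_subset_Ico_right h)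

lemma padNode_congr {a γ : ONat} {F F' : Set ONat}
    (h : ∀ i ∈ Set.Ico a γ, i ∈ F ↔ i ∈ F') : padNode a γ F = padNode a γ F' := by
  apply Set.image_congr
  intro i hi
  rw [if_congr (h i hi) rfl rfl]

lemma padNode_fst {a γ : ONat} (h : a ≤ γ) (F : Set ONat) :
    Prod.fst '' padNode a γ F = Set.Ico a γ := by
  ext i
  constructor
  · rintro ⟨w, hw, rfl⟩
    exact (mem_padNode.1 hw).1
  · intro hi
    exact ⟨(i, if i ∈ F then (1 : ONat) else 0), ⟨i, hi, rfl⟩, rfl⟩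

lemma nodeRestrict_padNode {a γ β : ONat} (F : Set ONat) (h : β ≤ γ) :
    nodeRestrict (padNode a γ F) β = padNode a β F := by
  ext z
  rw [nodeRestrict, Set.mem_sep_iff, mem_padNode, mem_padNode]
  constructor
  · rintro ⟨⟨⟨h1, h2⟩, h3⟩, h4⟩; exact ⟨⟨h1, h4⟩, h3⟩
  · rintro ⟨⟨h1, h4⟩, h3⟩; exact ⟨⟨⟨h1, lt_of_lt_of_le h4 h⟩, h3⟩, h4⟩

lemma padNode_restrict_self {a γ β : ONat} (F : Set ONat) (h : γ ≤ β) :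
    nodeRestrict (padNode a γ F) β = padNode a γ F := by
  ext z
  rw [nodeRestrict, Set.mem_sep_iff]
  constructor
  · exact fun hz => hz.1
  · intro hz
    refine ⟨hz, ?_⟩
    have := (mem_padNode.1 hz).1.2
    exact lt_of_lt_of_le this h

lemma nodeRestrict_union (x y : Node) (β : ONat) :
    nodeRestrict (x ∪ y) β = nodeRestrict x β ∪ nodeRestrict y β := by
  ext z
  simp only [nodeRestrict, Set.mem_union, Set.mem_sep_iff]
  constructor
  · rintro ⟨hz | hz, hβ⟩
    · exact Or.inl ⟨hz, hβ⟩
    · exact Or.inr ⟨hz, hβ⟩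
  · rintro (⟨hz, hβ⟩ | ⟨hz, hβ⟩)
    · exact ⟨Or.inl hz, hβ⟩
    · exact ⟨Or.inr hz, hβ⟩

/-- Main shape of the nodes in the extension: `z ∪ padNode a γ F`. -/
lemma padded_isNode {z : Node} (hz : IsNode z) (hzht : nodeHt z = a)
    {γ : ONat} (haγ : a ≤ γ) (hγ : γ < ω1) (F : Set ONat) :
    IsNode (z ∪ padNode a γ F) ∧ nodeHt (z ∪ padNode a γ F) = γ := by
  have himg : Prod.fst '' (z ∪ padNode a γ F) = Set.Iio γ := by
    rw [Set.image_union, padNode_fst haγ, hz.fst_image, hzht, Set.Iio_union_Ico_eq_Iio haγ]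
  have hval : ∀ w ∈ z ∪ padNode a γ F, w.2 < ω1 := by
    rintro w (hw | hw)
    · exact hz.1 w hw
    · rcases (mem_padNode.1 hw).2 with h
      rw [h]
      split
      · exact one_lt_omega1
      · exact zero_lt_omega1
  have hfun : ∀ w ∈ z ∪ padNode a γ F, ∀ w' ∈ z ∪ padNode a γ F, w.1 = w'.1 → w.2 = w'.2 := by
    rintro w (hw | hw) w' (hw' | hw') heq
    · exact hz.2.1 w hw w' hw' heq
    · exact absurd (heq ▸ hz.fst_lt hw) (not_lt_of_ge (hzht ▸ (mem_padNode.1 hw').1.1))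
    · exact absurd (heq ▸ (mem_padNode.1 hw).1.1) (not_le_of_gt (hzht ▸ hz.fst_lt hw'))
    · rw [(mem_padNode.1 hw).2, (mem_padNode.1 hw').2, heq]
  exact ⟨⟨hval, hfun, γ, hγ, himg⟩, nodeHt_eq himg⟩

lemma padded_restrict_low {z : Node} (hz : IsNode z) (hzht : nodeHt z = a)
    {γ β : ONat} (hβ : β ≤ a) (F : Set ONat) :
    nodeRestrict (z ∪ padNode a γ F) β = nodeRestrict z β := by
  rw [nodeRestrict_union]
  have : nodeRestrict (padNode a γ F) β = ∅ := by
    ext w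
    simp only [nodeRestrict, Set.mem_sep_iff, Set.mem_empty_iff_false, iff_false, not_and]
    intro hw
    exact not_lt_of_ge (le_trans hβ (mem_padNode.1 hw).1.1)
  rw [this, Set.union_empty]

lemma padded_restrict_mid {z : Node} (hz : IsNode z) (hzht : nodeHt z = a)
    {γ β : ONat} (haβ : a ≤ β) (hβγ : β ≤ γ) (F : Set ONat) :
    nodeRestrict (z ∪ padNode a γ F) β = z ∪ padNode a β F := by
  rw [nodeRestrict_union, nodeRestrict_eq_self hz (hzht ▸ haβ), nodeRestrict_padNode F hβγ]

end Pad
section ExtTree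

lemma lt_succ_iff' {b a : ONat} : b < a + 1 ↔ b ≤ a := by
  rw [Ordinal.add_one_eq_succ]; exact Order.lt_succ_iff

lemma padNode_self_empty (a : ONat) (F : Set ONat) : padNode a a F = ∅ := by
  rw [padNode, Set.Ico_self, Set.image_empty]

/-- The extension of a tree `t` of height `a+1` to height `e+1` by finite-support
`{0,1}`-valued padding above level `a`. -/
def extTree (t : Set Node) (a e : ONat) : Set Node :=
  t ∪ {w | ∃ z ∈ level t a, ∃ γ, a < γ ∧ γ ≤ e ∧
        ∃ F, F ⊆ Set.Ico a γ ∧ F.Finite ∧ w = z ∪ padNode a γ F}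

variable {t : Set Node} {a e : ONat}

lemma mem_extTree_old {w : Node} (hw : w ∈ t) : w ∈ extTree t a e := Or.inl hw

lemma mem_extTree_new {z : Node} {γ : ONat} {F : Set ONat} (hz : z ∈ level t a)
    (h1 : a < γ) (h2 : γ ≤ e) (hF : F ⊆ Set.Ico a γ) (hFf : F.Finite) :
    z ∪ padNode a γ F ∈ extTree t a e := Or.inr ⟨z, hz, γ, h1, h2, F, hF, hFf, rfl⟩

lemma extTree_node_cases (ht : IsTree t) (hth : treeHt t = a + 1) (he : e < ω1)
    {w : Node} (hw : w ∈ extTree t a e) :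
    (w ∈ t ∧ nodeHt w ≤ a) ∨
      (∃ z ∈ level t a, ∃ γ, a < γ ∧ γ ≤ e ∧ ∃ F, F ⊆ Set.Ico a γ ∧ F.Finite ∧
        w = z ∪ padNode a γ F ∧ nodeHt w = γ ∧ IsNode w) := by
  rcases hw with hw | ⟨z, hz, γ, h1, h2, F, hF, hFf, rfl⟩
  · exact Or.inl ⟨hw, ht_le_of_mem ht hth hw⟩
  · obtain ⟨hn, hht⟩ := padded_isNode (ht.1 z hz.1) hz.2 (le_of_lt h1) (lt_of_le_of_lt h2 he) F
    exact Or.inr ⟨z, hz, γ, h1, h2, F, hF, hFf, rfl, hht, hn⟩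

lemma extTree_isNode (ht : IsTree t) (hth : treeHt t = a + 1) (he : e < ω1)
    {w : Node} (hw : w ∈ extTree t a e) : IsNode w := by
  rcases extTree_node_cases ht hth he hw with ⟨hw, -⟩ | ⟨z, hz, γ, h1, h2, F, hF, hFf, rfl, hht, hn⟩
  · exact ht.1 w hw
  · exact hn

lemma extTree_decomp (ht : IsTree t) (hth : treeHt t = a + 1) (he : e < ω1) (hae : a ≤ e)
    {w : Node} (hw : w ∈ extTree t a e) (hwa : a ≤ nodeHt w) :
    ∃ z ∈ level t a, ∃ F, F ⊆ Set.Ico a (nodeHt w) ∧ F.Finite ∧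
      w = z ∪ padNode a (nodeHt w) F ∧ nodeHt w ≤ e := by
  rcases extTree_node_cases ht hth he hw with ⟨hw', hwle⟩ | ⟨z, hz, γ, h1, h2, F, hF, hFf, rfl, hht, hn⟩
  · have hwa' : nodeHt w = a := le_antisymm hwle hwa
    refine ⟨w, ⟨hw', hwa'⟩, ∅, by simp, Set.finite_empty, ?_, hwa'.le.trans hae⟩
    rw [hwa', padNode_self_empty, Set.union_empty]
  · rw [hht]
    exact ⟨z, hz, F, hF, hFf, rfl, h2⟩

lemma extTree_level_low (ht : IsTree t) (hth : treeHt t = a + 1) (he : e < ω1)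
    {γ : ONat} (hγ : γ ≤ a) : level (extTree t a e) γ = level t γ := by
  ext w
  constructor
  · rintro ⟨hw, rfl⟩
    rcases extTree_node_cases ht hth he hw with ⟨hw', -⟩ | ⟨z, hz, γ', h1, h2, F, hF, hFf, rfl, hht, -⟩
    · exact ⟨hw', rfl⟩
    · exact absurd (hht ▸ hγ : _ ≤ a) (not_le.2 h1)
  · rintro ⟨hw, rfl⟩
    exact ⟨mem_extTree_old hw, rfl⟩

lemma extTree_isTree (ht : IsTree t) (hth : treeHt t = a + 1) (he : e < ω1) :
    IsTree (extTree t a e) := by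
  refine ⟨fun w hw => extTree_isNode ht hth he hw, ?_⟩
  intro w hw β
  rcases hw with hw | ⟨z, hz, γ, h1, h2, F, hF, hFf, rfl⟩
  · exact mem_extTree_old (ht.2 w hw β)
  · have hzn : IsNode z := ht.1 z hz.1
    rcases le_or_gt β a with hβ | hβ
    · rw [padded_restrict_low hzn hz.2 hβ F]
      exact mem_extTree_old (ht.2 z hz.1 β)
    · rcases le_or_gt γ β with hγβ | hβγ
      · rw [nodeRestrict_union, nodeRestrict_eq_self hzn (hz.2 ▸ le_of_lt hβ),
          padNode_restrict_self F hγβ]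
        exact mem_extTree_new hz h1 h2 hF hFf
      · rw [padded_restrict_mid hzn hz.2 (le_of_lt hβ) (le_of_lt hβγ) F]
        have : padNode a β F = padNode a β (F ∩ Set.Ico a β) := by
          apply padNode_congr
          intro i hi
          simp only [Set.mem_inter_iff, Set.mem_Ico]
          exact ⟨fun h => ⟨h, hi.1, hi.2⟩, fun h => h.1⟩
        rw [this]
        exact mem_extTree_new hz hβ (le_of_lt (lt_of_lt_of_le hβγ h2))
          (Set.inter_subset_right) (hFf.inter_of_left _)

lemma extTree_countable (ht : IsTree t) (hth : treeHt t = a + 1) (he : e < ω1)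
    (hc : t.Countable) : (extTree t a e).Countable := by
  apply Set.Countable.union hc
  have hIio : (Set.Iio (e + 1) : Set ONat).Countable := countable_Iio (add_one_lt_omega1 he)
  have hFin : {F : Set ONat | F.Finite ∧ F ⊆ Set.Iio e}.Countable :=
    Set.countable_setOf_finite_subset (countable_Iio he)
  have himg : {w | ∃ z ∈ level t a, ∃ γ, a < γ ∧ γ ≤ e ∧
        ∃ F, F ⊆ Set.Ico a γ ∧ F.Finite ∧ w = z ∪ padNode a γ F} ⊆
      (fun q : Node × ONat × Set ONat => q.1 ∪ padNode a q.2.1 q.2.2) ''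
        (t ×ˢ (Set.Iio (e + 1) ×ˢ {F : Set ONat | F.Finite ∧ F ⊆ Set.Iio e})) := by
    rintro w ⟨z, hz, γ, h1, h2, F, hF, hFf, rfl⟩
    refine ⟨(z, γ, F), ⟨hz.1, lt_succ_iff'.2 h2, hFf, ?_⟩, rfl⟩
    intro i hi
    exact lt_of_lt_of_le (hF hi).2 h2
  exact Set.Countable.mono himg
    (Set.Countable.image (hc.prod (hIio.prod hFin)) _)

lemma extTree_treeHt (ht : IsTree t) (hth : treeHt t = a + 1) (he : e < ω1) (hae : a < e) :
    treeHt (extTree t a e) = e + 1 := by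
  apply treeHt_eq_succ
  · intro γ hγ
    rcases le_or_gt γ a with hγa | haγ
    · obtain ⟨x, hx⟩ := level_nonempty_of_le hth hγa
      exact ⟨x, (extTree_level_low ht hth he hγa).symm ▸ hx⟩
    · obtain ⟨z, hz⟩ := level_nonempty_of_le hth (le_refl a)
      have hmem := mem_extTree_new (F := ∅) hz haγ hγ (by simp) Set.finite_empty
      obtain ⟨-, hht⟩ := padded_isNode (ht.1 z hz.1) hz.2 (le_of_lt haγ) (lt_of_le_of_lt hγ he) ∅
      exact ⟨_, hmem, hht⟩
  · ext w
    simp only [Set.mem_empty_iff_false, iff_false]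
    rintro ⟨hw, hht⟩
    rcases extTree_node_cases ht hth he hw with ⟨-, hwle⟩ | ⟨z, hz, γ, h1, h2, F, hF, hFf, rfl, hht', -⟩
    · rw [hht] at hwle
      exact absurd hwle (not_le.2 (lt_trans hae (lt_succ_iff'.2 le_rfl)))
    · rw [hht] at hht'
      have : e + 1 ≤ e := hht' ▸ h2
      exact absurd this (not_le.2 (lt_succ_iff'.2 le_rfl))

end ExtTree
section ExtTree2

variable {t : Set Node} {a e : ONat}

lemma succ_lt_succ_iff' {b a : ONat} : b + 1 < a + 1 ↔ b < a := by
  rw [Ordinal.add_one_eq_succ, Ordinal.add_one_eq_succ]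
  exact Order.succ_lt_succ_iff

lemma lt_add_one_self (a : ONat) : a < a + 1 := lt_succ_iff'.2 le_rfl

lemma node_ne_of_ht_ne {x y : Node} (h : nodeHt x ≠ nodeHt y) : x ≠ y :=
  fun heq => h (heq ▸ rfl)

lemma extTree_restrict_low (ht : IsTree t) (hth : treeHt t = a + 1) (he : e < ω1)
    {β : ONat} (hβ : β ≤ a + 1) : restrictTree (extTree t a e) β = restrictTree t β := by
  ext w
  constructor
  · rintro ⟨hw, hwβ⟩
    rcases extTree_node_cases ht hth he hw with ⟨hw', -⟩ | ⟨z, hz, γ, h1, h2, F, hF, hFf, rfl, hht, -⟩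
    · exact ⟨hw', hwβ⟩
    · rw [hht] at hwβ
      exact absurd h1 (not_lt_of_ge (lt_succ_iff'.1 (lt_of_lt_of_le hwβ hβ)))
  · rintro ⟨hw, hwβ⟩
    exact ⟨mem_extTree_old hw, hwβ⟩

lemma extTree_endExtends (ht : IsTree t) (hth : treeHt t = a + 1) (he : e < ω1) :
    EndExtends t (extTree t a e) := by
  rw [EndExtends, hth, extTree_restrict_low ht hth he le_rfl, restrictTree_treeHt ht hth]

lemma extTree_restrict_mid (ht : IsTree t) (hth : treeHt t = a + 1) (he : e < ω1)
    {γ : ONat} (h1 : a < γ) (h2 : γ ≤ e) :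
    restrictTree (extTree t a e) (γ + 1) = extTree t a γ := by
  ext w
  constructor
  · rintro ⟨hw, hwβ⟩
    rcases extTree_node_cases ht hth he hw with ⟨hw', -⟩ | ⟨z, hz, γ', h1', h2', F, hF, hFf, rfl, hht, -⟩
    · exact mem_extTree_old hw'
    · rw [hht] at hwβ
      exact mem_extTree_new hz h1' (lt_succ_iff'.1 hwβ) hF hFf
  · intro hw
    rcases hw with hw | ⟨z, hz, γ', h1', h2', F, hF, hFf, rfl⟩
    · exact ⟨mem_extTree_old hw, lt_of_le_of_lt (ht_le_of_mem ht hth hw)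
        (lt_of_lt_of_le h1 (le_of_lt (lt_add_one_self γ)))⟩
    · obtain ⟨-, hht⟩ := padded_isNode (ht.1 z hz.1) hz.2 (le_of_lt h1')
        (lt_of_le_of_lt (h2'.trans h2) he) F
      refine ⟨mem_extTree_new hz h1' (h2'.trans h2) hF hFf, ?_⟩
      rw [hht]
      exact lt_succ_iff'.2 h2'

lemma extTree_normal (ht : IsTree t) (hth : treeHt t = a + 1) (he : e < ω1)
    (hN : IsNormalTree t) (hae : a < e) : IsNormalTree (extTree t a e) := by
  have hT := extTree_treeHt ht hth he hae
  constructor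
  · intro α β hαβ hβ x hx
    rw [hT, lt_succ_iff'] at hβ
    rcases le_or_gt β a with hβa | haβ
    · have hαa : α ≤ a := le_of_lt (lt_of_lt_of_le hαβ hβa)
      rw [extTree_level_low ht hth he hαa] at hx
      obtain ⟨y, hy, hxy⟩ := hN.1 α β hαβ (hth ▸ lt_succ_iff'.2 hβa) x hx
      exact ⟨y, (extTree_level_low ht hth he hβa).symm ▸ hy, hxy⟩
    · rcases lt_or_ge α a with hαa | haα
      · rw [extTree_level_low ht hth he (le_of_lt hαa)] at hx
        obtain ⟨x₁, hx₁, hxx₁⟩ := hN.1 α a hαa (hth ▸ lt_add_one_self a) x hx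
        obtain ⟨-, hht⟩ := padded_isNode (ht.1 x₁ hx₁.1) hx₁.2 (le_of_lt haβ)
          (lt_of_le_of_lt hβ he) ∅
        refine ⟨x₁ ∪ padNode a β ∅,
          ⟨mem_extTree_new hx₁ haβ hβ (by simp) Set.finite_empty, hht⟩, ?_⟩
        exact subset_trans hxx₁ Set.subset_union_left
      · obtain ⟨hx1, hx2⟩ := hx
        obtain ⟨z, hz, F, hF, hFf, hxe, -⟩ :=
          extTree_decomp ht hth he (le_of_lt hae) hx1 (hx2 ▸ haα)
        rw [hx2] at hxe hF
        obtain ⟨-, hht⟩ := padded_isNode (ht.1 z hz.1) hz.2 (le_of_lt haβ)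
          (lt_of_le_of_lt hβ he) F
        refine ⟨z ∪ padNode a β F,
          ⟨mem_extTree_new hz haβ hβ
            (hF.trans (Set.Ico_subset_Ico_right (le_of_lt hαβ))) hFf, hht⟩, ?_⟩
        rw [hxe]
        exact Set.union_subset_union_right z (padNode_mono F (le_of_lt hαβ))
  · intro α hα x hx
    rw [hT, succ_lt_succ_iff'] at hα
    rcases lt_or_ge α a with hαa | haα
    · rw [extTree_level_low ht hth he (le_of_lt hαa)] at hx
      obtain ⟨β, hβ, y₁, hy₁, y₂, hy₂, hne, hs₁, hs₂⟩ :=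
        hN.2 α (hth ▸ succ_lt_succ_iff'.2 hαa) x hx
      rw [hth, lt_succ_iff'] at hβ
      refine ⟨β, hT ▸ lt_of_le_of_lt hβ (lt_of_lt_of_le hae (le_of_lt (lt_add_one_self e))),
        y₁, (extTree_level_low ht hth he hβ).symm ▸ hy₁,
        y₂, (extTree_level_low ht hth he hβ).symm ▸ hy₂, hne, hs₁, hs₂⟩
    · obtain ⟨hx1, hx2⟩ := hx
      obtain ⟨z, hz, F, hF, hFf, hxe, -⟩ :=
        extTree_decomp ht hth he (le_of_lt hae) hx1 (hx2 ▸ haα)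
      rw [hx2] at hxe hF
      have hzn : IsNode z := ht.1 z hz.1
      have hαe1 : α + 1 ≤ e := by
        rw [← lt_succ_iff', succ_lt_succ_iff']
        exact hα
      have haα1 : a < α + 1 := lt_of_le_of_lt haα (lt_add_one_self α)
      have hαIco : α ∈ Set.Ico a (α + 1) := ⟨haα, lt_add_one_self α⟩
      have hαnF : α ∉ F := fun h => absurd (hF h).2 (lt_irrefl α)
      have hF1 : F ⊆ Set.Ico a (α + 1) :=
        hF.trans (Set.Ico_subset_Ico_right (le_of_lt (lt_add_one_self α)))
      have hF2 : F ∪ {α} ⊆ Set.Ico a (α + 1) := by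
        intro i hi
        rcases hi with hi | hi
        · exact hF1 hi
        · rw [Set.mem_singleton_iff] at hi
          rw [hi]; exact hαIco
      have hα1ω : α + 1 < ω1 := add_one_lt_omega1 (lt_trans hα he)
      obtain ⟨hn₁, hht₁⟩ := padded_isNode hzn hz.2 (le_of_lt haα1) hα1ω F
      obtain ⟨hn₂, hht₂⟩ := padded_isNode hzn hz.2 (le_of_lt haα1) hα1ω (F ∪ {α})
      have hmem₁ := mem_extTree_new (e := e) hz haα1 hαe1 hF1 hFf
      have hmem₂ := mem_extTree_new (e := e) hz haα1 hαe1 hF2 (hFf.union (Set.finite_singleton α))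
      have hp0 : ((α, 0) : ONat × ONat) ∈ padNode a (α + 1) F := by
        rw [mem_padNode]
        exact ⟨hαIco, by simp [hαnF]⟩
      have hp1 : ((α, 1) : ONat × ONat) ∈ padNode a (α + 1) (F ∪ {α}) := by
        rw [mem_padNode]
        refine ⟨hαIco, by simp⟩
      have hne : z ∪ padNode a (α + 1) F ≠ z ∪ padNode a (α + 1) (F ∪ {α}) := by
        intro heq
        have h0mem : ((α, 0) : ONat × ONat) ∈ z ∪ padNode a (α + 1) (F ∪ {α}) := by
          rw [← heq]; exact Or.inr hp0
        have := hn₂.2.1 _ h0mem _ (Or.inr hp1) rfl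
        exact zero_ne_one this
      have hcongr : padNode a α F = padNode a α (F ∪ {α}) := by
        apply padNode_congr
        intro i hi
        simp only [Set.mem_union, Set.mem_singleton_iff]
        exact ⟨Or.inl, fun h => h.elim id (fun h' => absurd (h' ▸ hi.2) (lt_irrefl α))⟩
      have hsub₁ : x ⊂ z ∪ padNode a (α + 1) F := by
        rw [Set.ssubset_iff_subset_ne, hxe]
        refine ⟨Set.union_subset_union_right z (padNode_mono F (le_of_lt (lt_add_one_self α))), ?_⟩
        apply node_ne_of_ht_ne
        rw [(padded_isNode hzn hz.2 haα (lt_trans hα he) F).2, hht₁]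
        exact ne_of_lt (lt_add_one_self α)
      have hsub₂ : x ⊂ z ∪ padNode a (α + 1) (F ∪ {α}) := by
        rw [Set.ssubset_iff_subset_ne, hxe, hcongr]
        refine ⟨Set.union_subset_union_right z (padNode_mono _ (le_of_lt (lt_add_one_self α))), ?_⟩
        apply node_ne_of_ht_ne
        rw [(padded_isNode hzn hz.2 haα (lt_trans hα he) (F ∪ {α})).2, hht₂]
        exact ne_of_lt (lt_add_one_self α)
      exact ⟨α + 1, hT ▸ succ_lt_succ_iff'.2 hα,
        _, ⟨hmem₁, hht₁⟩, _, ⟨hmem₂, hht₂⟩, hne, hsub₁, hsub₂⟩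

lemma extTree_CNTree (ht : IsTree t) (hth : treeHt t = a + 1) (he : e < ω1)
    (hc : t.Countable) (hN : IsNormalTree t) (hae : a < e) :
    CNTree (extTree t a e) ∧ treeHt (extTree t a e) = e + 1 :=
  ⟨⟨extTree_isTree ht hth he, extTree_countable ht hth he hc,
    extTree_normal ht hth he hN hae⟩, extTree_treeHt ht hth he hae⟩

end ExtTree2
section Main
open scoped Classical

lemma succ_le_succ' {b a : ONat} (h : b ≤ a) : b + 1 ≤ a + 1 := by
  rw [Ordinal.add_one_eq_succ, Ordinal.add_one_eq_succ]
  exact Order.succ_le_succ h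

lemma le_refl_cond {κ : Cardinal.{0}} {p : Cond} (hp : IsCond κ p) : le p p := by
  obtain ⟨-, ⟨htree, -, -⟩, hth, -⟩ := hp
  refine ⟨le_rfl, ?_, fun x _ => rfl, subset_rfl, fun γ _ => ⟨subset_rfl, subset_rfl⟩, ?_, ?_⟩
  · rw [EndExtends, hth]
    exact restrictTree_treeHt htree hth
  · have : {γ | γ ∈ p.U ∧ p.β γ < p.β γ} = ∅ := by
      ext γ; simp
    rw [this]; exact Set.countable_empty
  · have : {γ | γ ∈ p.U ∧ p.δ γ < p.δ γ} = ∅ := by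
      ext γ; simp
    rw [this]; exact Set.countable_empty
end Main
open scoped Classical

/-- For every `ε < ω₁`, the set `D¹_ε = {p ∈ ℙ : α_p ≥ ε}` is dense and open in `ℙ`. -/
theorem statement0 (κ : Cardinal.{0}) (hκ : κ.IsInaccessible) (ε : ONat) (hε : ε < ω1) :
    (∀ p : Cond, IsCond κ p → ∃ q : Cond, (IsCond κ q ∧ ε ≤ q.α) ∧ le q p) ∧
    (∀ p : Cond, (IsCond κ p ∧ ε ≤ p.α) → ∀ q : Cond, IsCond κ q → le q p →
      IsCond κ q ∧ ε ≤ q.α) := by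
  constructor
  · -- density
    intro p hp
    rcases le_or_gt ε p.α with hle | hlt
    · exact ⟨p, ⟨hp, hle⟩, le_refl_cond hp⟩
    obtain ⟨ha, ⟨htree, hcnt, hnorm⟩, hth, hc1, hc2, hd1, hd2, he', hf', hg⟩ := hp
    set a := p.α with ha_def
    -- the extension
    set q : Cond := ⟨ε, extTree p.t a ε,
      fun x => if x ∈ p.t then p.k x else extTree (p.k (nodeRestrict x a)) a (nodeHt x),
      p.U, p.b, p.β, p.f, p.δ⟩ with hq_def
    have hTtree : IsTree q.t := extTree_isTree htree hth hε
    obtain ⟨hTC, hTht⟩ := extTree_CNTree htree hth hε hcnt hnorm hlt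
    -- facts about new nodes
    have hnew : ∀ x ∈ q.t, x ∉ p.t →
        ∃ z ∈ level p.t a, a < nodeHt x ∧ nodeHt x ≤ ε ∧ nodeRestrict x a = z ∧
          q.k x = extTree (p.k z) a (nodeHt x) := by
      intro x hx hxp
      rcases extTree_node_cases htree hth hε hx with ⟨hx', -⟩ |
        ⟨z, hz, γ, h1, h2, F, hF, hFf, hxe, hht, -⟩
      · exact absurd hx' hxp
      refine ⟨z, hz, hht ▸ h1, hht ▸ h2, ?_, ?_⟩
      · rw [hxe, padded_restrict_low (htree.1 z hz.1) hz.2 le_rfl F,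
          nodeRestrict_eq_self (htree.1 z hz.1) (le_of_eq hz.2)]
      · show (if x ∈ p.t then p.k x else extTree (p.k (nodeRestrict x a)) a (nodeHt x)) = _
        rw [if_neg hxp, hxe, padded_restrict_low (htree.1 z hz.1) hz.2 le_rfl F,
          nodeRestrict_eq_self (htree.1 z hz.1) (le_of_eq hz.2)]
    have hkold : ∀ x ∈ p.t, q.k x = p.k x := by
      intro x hx
      show (if x ∈ p.t then p.k x else _) = p.k x
      rw [if_pos hx]
    -- clause (c1)
    have hqc1 : ∀ x ∈ q.t, CNTree (q.k x) ∧ treeHt (q.k x) = nodeHt x + 1 := by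
      intro x hx
      by_cases hxp : x ∈ p.t
      · rw [hkold x hxp]; exact hc1 x hxp
      · obtain ⟨z, hz, h1, h2, -, hke⟩ := hnew x hx hxp
        obtain ⟨hzc, hzt⟩ := hc1 z hz.1
        rw [hz.2] at hzt
        rw [hke]
        exact extTree_CNTree hzc.1 hzt (lt_of_le_of_lt h2 hε) hzc.2.1 hzc.2.2 h1
    -- clause (c2)
    have hqc2 : ∀ x ∈ q.t, ∀ y ∈ q.t, x ⊂ y → EndExtends (q.k x) (q.k y) := by
      intro x hx y hy hxy
      have hxn : IsNode x := hTtree.1 x hx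
      have hyn : IsNode y := hTtree.1 y hy
      by_cases hyp : y ∈ p.t
      · -- then x is also old
        have hxp : x ∈ p.t := by
          rcases extTree_node_cases htree hth hε hx with ⟨hx', -⟩ |
            ⟨z, hz, γ, h1, h2, F, hF, hFf, hxe, hht, -⟩
          · exact hx'
          · have hle2 := (node_subset_eq_restrict hxn hyn hxy.1).2
            have := ht_le_of_mem htree hth hyp
            rw [hht] at hle2
            exact absurd (lt_of_lt_of_le h1 (hle2.trans this)) (lt_irrefl _)
        rw [hkold x hxp, hkold y hyp]
        exact hc2 x hxp y hyp hxy
      · obtain ⟨z, hz, h1, h2, hrz, hke⟩ := hnew y hy hyp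
        have hzn : IsNode z := htree.1 z hz.1
        obtain ⟨hzc, hzt⟩ := hc1 z hz.1
        rw [hz.2] at hzt
        by_cases hxp : x ∈ p.t
        · -- old below new
          have hxz : x ⊆ z := by
            have h3 := (node_subset_eq_restrict hxn hyn hxy.1).1
            have hxa : nodeHt x ≤ a := ht_le_of_mem htree hth hxp
            rw [← hrz]
            rw [h3]
            intro w hw
            exact ⟨hw.1, lt_of_lt_of_le hw.2 hxa⟩
          rw [hkold x hxp, hke, EndExtends]
          have hxa : nodeHt x ≤ a := ht_le_of_mem htree hth hxp
          rw [(hc1 x hxp).2, extTree_restrict_low hzc.1 hzt (lt_of_le_of_lt h2 hε)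
            (succ_le_succ' hxa)]
          rcases hxz.ssubset_or_eq with hss | heq
          · have := hc2 x hxp z hz.1 hss
            rw [EndExtends, (hc1 x hxp).2] at this
            exact this
          · rw [heq, hz.2]
            exact restrictTree_treeHt hzc.1 hzt
        · obtain ⟨z', hz', h1', h2', hrz', hke'⟩ := hnew x hx hxp
          have hz'n : IsNode z' := htree.1 z' hz'.1
          -- z' = z
          have hzz : z' = z := by
            have hsub : z' ⊆ y := subset_trans (hrz' ▸ nodeRestrict_subset x a) hxy.1
            have := (node_subset_eq_restrict hz'n hyn hsub).1
            rw [hz'.2] at this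
            rw [this, ← hrz]
          have hlt' : nodeHt x < nodeHt y := by
            rcases lt_or_ge (nodeHt x) (nodeHt y) with h | h
            · exact h
            · exact absurd (node_subset_ht_eq hxn hyn hxy.1 h)
                (Set.ssubset_iff_subset_ne.1 hxy).2
          rw [hke, hke', hzz, EndExtends,
            extTree_treeHt hzc.1 hzt (lt_of_le_of_lt h2' hε) h1']
          exact extTree_restrict_mid hzc.1 hzt (lt_of_le_of_lt h2 hε) h1' (le_of_lt hlt')
    -- clause (e)
    have hqe : ∀ γ ∈ p.U, p.β γ ≤ ε ∧
        IsFunGraph (p.b γ) (restrictTree q.t (p.β γ + 1)) ∧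
        (∀ x y, (x, y) ∈ p.b γ → y ∈ level (q.k x) (nodeHt x)) ∧
        (∀ x y x' y', (x, y) ∈ p.b γ → (x', y') ∈ p.b γ → x ⊆ x' → y ⊆ y') := by
      intro γ hγ
      obtain ⟨hβa, hfg, hlev, hmono⟩ := he' γ hγ
      have hrt : restrictTree q.t (p.β γ + 1) = restrictTree p.t (p.β γ + 1) :=
        extTree_restrict_low htree hth hε (succ_le_succ' hβa)
      refine ⟨hβa.trans (le_of_lt hlt), by rw [hrt]; exact hfg, ?_, hmono⟩
      intro x y hxy
      have hxp : x ∈ p.t := (hfg.1 (x, y) hxy).1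
      rw [hkold x hxp]
      exact hlev x y hxy
    -- clause (g)
    have hqg : ∀ x ∈ restrictTree q.t q.α, ∀ U₀ : Set ONat, U₀ ⊆ q.U → U₀.Finite →
        ∀ ε' : ONat, nodeHt x < ε' → ε' ≤ q.α →
        ∃ x' ∈ level q.t ε', x ⊂ x' ∧
          ∀ γ₁ ∈ U₀, ∀ γ₂ ∈ U₀,
            q.β γ₁ < ε' ∨ q.β γ₂ < ε' ∨
            ∀ y₁ y₂ y₁' y₂', (x, y₁) ∈ q.b γ₁ → (x, y₂) ∈ q.b γ₂ →
              (x', y₁') ∈ q.b γ₁ → (x', y₂') ∈ q.b γ₂ → y₁ = y₂ → y₁' = y₂' := by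
      intro x hx U₀ hU₀ hU₀f ε' hxε' hε'ε
      rcases le_or_gt ε' a with hε'a | haε'
      · have hxa : nodeHt x < a := lt_of_lt_of_le hxε' hε'a
        have hxp : x ∈ p.t := by
          rcases extTree_node_cases htree hth hε hx.1 with ⟨hx', -⟩ |
            ⟨z, hz, γ, h1, h2, F, hF, hFf, hxe, hht, -⟩
          · exact hx'
          · rw [hht] at hxa
            exact absurd (lt_trans h1 hxa) (lt_irrefl _)
        obtain ⟨x', hx', hss, hsep⟩ := hg x ⟨hxp, hxa⟩ U₀ hU₀ hU₀f ε' hxε' hε'a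
        exact ⟨x', (extTree_level_low htree hth hε hε'a).symm ▸ hx', hss, hsep⟩
      · obtain ⟨x', hx', hsub⟩ := hTC.2.2.1 (nodeHt x) ε' hxε'
          (by rw [hTht]; exact lt_of_le_of_lt hε'ε (lt_add_one_self ε)) x (mem_level_self hx.1)
        refine ⟨x', hx', Set.ssubset_iff_subset_ne.2 ⟨hsub, node_ne_of_ht_ne ?_⟩, ?_⟩
        · rw [hx'.2]
          exact ne_of_lt hxε'
        · intro γ₁ hγ₁ γ₂ hγ₂
          exact Or.inl (lt_of_le_of_lt (he' γ₁ (hU₀ hγ₁)).1 haε')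
    refine ⟨q, ⟨⟨hε, hTC, hTht, hqc1, hqc2, hd1, hd2, hqe,
      fun γ hγ => ⟨(hf' γ hγ).1.trans (le_of_lt hlt), (hf' γ hγ).2⟩, hqg⟩, le_rfl⟩,
      le_of_lt hlt, extTree_endExtends htree hth hε, hkold, subset_rfl,
      fun γ _ => ⟨subset_rfl, subset_rfl⟩, ?_, ?_⟩
    · have : {γ | γ ∈ p.U ∧ p.β γ < q.β γ} = ∅ := by
        ext γ; simp [hq_def]
      rw [this]; exact Set.countable_empty
    · have : {γ | γ ∈ p.U ∧ p.δ γ < q.δ γ} = ∅ := by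
        ext γ; simp [hq_def]
      rw [this]; exact Set.countable_empty
  · rintro p ⟨hp, hε'⟩ q hq hle
    exact ⟨hq, le_trans hε' hle.1⟩

end JinShelah563
end

section
/- Suppose p, q ∈ ℙ satisfy: α_p = α_q, t_p = t_q, k_p = k_q; for every γ ∈ U_p ∩ U_q, b^p_γ = b^q_γ and f^p_γ = f^q_γ; and the two sets of functions {b^p_γ : γ ∈ U_p \ U_q} and {b^q_γ : γ ∈ U_q \ U_p} are equal as sets of functions. Then the tuple r = ⟨α_p, t_p, k_p, U_p ∪ U_q, B_p ∪ B_q, F_p ∪ F_q⟩ is a condition of ℙ and r is a common lower bound of p and q (r ≤ p and r ≤ q); in particular p and q are compatible. -/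
namespace JinShelah563

open Cardinal Set

open Classical in
/-- The amalgamation `r = ⟨α_p, t_p, k_p, U_p ∪ U_q, B_p ∪ B_q, F_p ∪ F_q⟩` of two
conditions `p` and `q`: for indices `γ ∈ U_p` the data of `p` is used, for the
remaining indices the data of `q` is used. -/
noncomputable def amalg (p q : Cond) : Cond where
  α := p.α
  t := p.t
  k := p.k
  U := p.U ∪ q.U
  b := fun γ => if γ ∈ p.U then p.b γ else q.b γ
  β := fun γ => if γ ∈ p.U then p.β γ else q.β γ
  f := fun γ => if γ ∈ p.U then p.f γ else q.f γ
  δ := fun γ => if γ ∈ p.U then p.δ γ else q.δ γ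


namespace ForStatement7

lemma lt_add_one' (o : ONat) : o < o + 1 := by
  rw [Ordinal.add_one_eq_succ]; exact Order.lt_succ o

lemma le_of_lt_add_one' {a b : ONat} (h : a < b + 1) : a ≤ b := by
  rw [Ordinal.add_one_eq_succ, Order.lt_succ_iff] at h; exact h

lemma node_fst_image {x : Node} (hx : IsNode x) : Prod.fst '' x = Set.Iio (nodeHt x) := by
  obtain ⟨-, -, β, -, hβ⟩ := hx
  exact csInf_mem (⟨β, hβ⟩ : Set.Nonempty {β | Prod.fst '' x = Set.Iio β})

lemma nodeHt_eq_of_image {x : Node} {β : ONat} (h : Prod.fst '' x = Set.Iio β) :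
    nodeHt x = β := by
  have hs : {γ : ONat | Prod.fst '' x = Set.Iio γ} = {β} := by
    ext γ
    simp only [Set.mem_setOf_eq, Set.mem_singleton_iff]
    constructor
    · intro hγ
      exact Set.Iio_injective (hγ.symm.trans h)
    · rintro rfl; exact h
  rw [nodeHt, hs, csInf_singleton]

lemma nodeHt_restrict {x : Node} (hx : IsNode x) {β : ONat} (hβ : β ≤ nodeHt x) :
    nodeHt (nodeRestrict x β) = β := by
  apply nodeHt_eq_of_image
  ext a
  constructor
  · rintro ⟨z, ⟨hzx, hz⟩, rfl⟩; exact hz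
  · intro ha
    have : a ∈ Prod.fst '' x := by
      rw [node_fst_image hx]; exact lt_of_lt_of_le ha hβ
    obtain ⟨z, hz, rfl⟩ := this
    exact ⟨z, ⟨hz, ha⟩, rfl⟩

lemma nodeHt_lt_omega1 {x : Node} (hx : IsNode x) : nodeHt x < ω1 := by
  obtain ⟨-, -, β, hβ, himg⟩ := hx
  rw [nodeHt_eq_of_image himg]; exact hβ

lemma nodeHt_lt_treeHt {t : Set Node} (ht : IsTree t) {x : Node} (hx : x ∈ t) :
    nodeHt x < treeHt t := by
  have hS : ({α : ONat | level t α = ∅}).Nonempty := by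
    refine ⟨ω1, ?_⟩
    ext y
    simp only [level, Set.mem_setOf_eq, Set.mem_empty_iff_false, iff_false, not_and]
    intro hy hlt
    exact absurd hlt (ne_of_lt (nodeHt_lt_omega1 (ht.1 y hy)))
  by_contra hle
  push_neg at hle
  have hmem : treeHt t ∈ {α : ONat | level t α = ∅} := csInf_mem hS
  have hr : nodeRestrict x (treeHt t) ∈ t := ht.2 x hx (treeHt t)
  have : nodeRestrict x (treeHt t) ∈ level t (treeHt t) :=
    ⟨hr, nodeHt_restrict (ht.1 x hx) hle⟩
  rw [hmem] at this
  exact this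

lemma endExtends_self {t : Set Node} (ht : IsTree t) : EndExtends t t := by
  unfold EndExtends restrictTree
  ext x
  simp only [Set.mem_setOf_eq, and_iff_left_iff_imp]
  exact fun hx => nodeHt_lt_treeHt ht hx

lemma level_nonempty {t : Set Node} {β : ONat} (h : β < treeHt t) :
    (level t β).Nonempty := by
  by_contra hne
  rw [Set.not_nonempty_iff_eq_empty] at hne
  exact absurd (csInf_le' (show β ∈ {α : ONat | level t α = ∅} from hne)) (not_le_of_gt h)

lemma beta_le {t : Set Node} {β₁ β₂ : ONat} (hne : (level t β₁).Nonempty)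
    (h : restrictTree t (β₁ + 1) ⊆ restrictTree t (β₂ + 1)) : β₁ ≤ β₂ := by
  obtain ⟨z, hz, hzht⟩ := hne
  have hmem : z ∈ restrictTree t (β₁ + 1) := ⟨hz, by rw [hzht]; exact lt_add_one' β₁⟩
  have := (h hmem).2
  rw [hzht] at this
  exact le_of_lt_add_one' this

lemma beta_unique {t : Set Node} {α β₁ β₂ : ONat}
    (hht : treeHt t = α + 1) (h₁ : β₁ ≤ α) (h₂ : β₂ ≤ α)
    (h : restrictTree t (β₁ + 1) = restrictTree t (β₂ + 1)) : β₁ = β₂ := by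
  have hne₁ : (level t β₁).Nonempty :=
    level_nonempty (by rw [hht]; exact lt_of_le_of_lt h₁ (lt_add_one' α))
  have hne₂ : (level t β₂).Nonempty :=
    level_nonempty (by rw [hht]; exact lt_of_le_of_lt h₂ (lt_add_one' α))
  exact le_antisymm (beta_le hne₁ h.subset) (beta_le hne₂ h.symm.subset)

lemma funGraph_dom_unique {A B : Type*} {g : Set (A × B)} {d₁ d₂ : Set A}
    (h₁ : IsFunGraph g d₁) (h₂ : IsFunGraph g d₂) : d₁ = d₂ := by
  ext a
  constructor
  · intro ha
    obtain ⟨y, hy, -⟩ := h₁.2 a ha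
    exact h₂.1 (a, y) hy
  · intro ha
    obtain ⟨y, hy, -⟩ := h₂.2 a ha
    exact h₁.1 (a, y) hy

end ForStatement7

open ForStatement7 in
/-- If `p, q ∈ ℙ` have the same `α`, `t`, `k`, agree (as to `b`, `β`, `f`, `δ`) on
`U_p ∩ U_q`, and `{b^p_γ : γ ∈ U_p \ U_q}` and `{b^q_γ : γ ∈ U_q \ U_p}` are the same
set of functions, then `r = ⟨α_p, t_p, k_p, U_p ∪ U_q, B_p ∪ B_q, F_p ∪ F_q⟩` is a
condition of `ℙ` and a common lower bound of `p` and `q`; in particular `p` and `q`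
are compatible. -/
theorem statement7 (κ : Cardinal.{0}) (hκ : κ.IsInaccessible) (p q : Cond)
    (hp : IsCond κ p) (hq : IsCond κ q)
    (hα : p.α = q.α) (ht : p.t = q.t) (hk : ∀ x ∈ p.t, p.k x = q.k x)
    (hbf : ∀ γ ∈ p.U ∩ q.U,
      p.b γ = q.b γ ∧ p.β γ = q.β γ ∧ p.f γ = q.f γ ∧ p.δ γ = q.δ γ)
    (hB : p.b '' (p.U \ q.U) = q.b '' (q.U \ p.U)) :
    IsCond κ (amalg p q) ∧ le (amalg p q) p ∧ le (amalg p q) q ∧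
      ∃ r : Cond, IsCond κ r ∧ le r p ∧ le r q := by
  obtain ⟨hpa, hpb, hpht, hpk, hpkmono, hpU, hpUcard, hpe, hpf, hpg⟩ := hp
  obtain ⟨hqa, hqb, hqht, hqk, hqkmono, hqU, hqUcard, hqe, hqf, hqg⟩ := hq
  have htree : IsTree p.t := hpb.1
  have hrb : ∀ γ ∈ p.U, (amalg p q).b γ = p.b γ := fun γ hγ => if_pos hγ
  have hrβ : ∀ γ ∈ p.U, (amalg p q).β γ = p.β γ := fun γ hγ => if_pos hγ
  have hrf : ∀ γ ∈ p.U, (amalg p q).f γ = p.f γ := fun γ hγ => if_pos hγ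
  have hrδ : ∀ γ ∈ p.U, (amalg p q).δ γ = p.δ γ := fun γ hγ => if_pos hγ
  have hrb' : ∀ γ, γ ∉ p.U → (amalg p q).b γ = q.b γ := fun γ hγ => if_neg hγ
  have hrβ' : ∀ γ, γ ∉ p.U → (amalg p q).β γ = q.β γ := fun γ hγ => if_neg hγ
  have hrf' : ∀ γ, γ ∉ p.U → (amalg p q).f γ = q.f γ := fun γ hγ => if_neg hγ
  have hrδ' : ∀ γ, γ ∉ p.U → (amalg p q).δ γ = q.δ γ := fun γ hγ => if_neg hγ
  -- translation of the b-data of q-only indices into p's data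
  have hbβ : ∀ γ ∈ q.U \ p.U, ∃ γ' ∈ p.U, p.b γ' = q.b γ ∧ p.β γ' = q.β γ := by
    intro γ hγ
    have hmem : q.b γ ∈ p.b '' (p.U \ q.U) := by rw [hB]; exact ⟨γ, hγ, rfl⟩
    obtain ⟨γ', hγ', hbeq⟩ := hmem
    refine ⟨γ', hγ'.1, hbeq, ?_⟩
    have h1 := hpe γ' hγ'.1
    have h2 := hqe γ hγ.1
    have hdom : restrictTree p.t (p.β γ' + 1) = restrictTree p.t (q.β γ + 1) := by
      refine funGraph_dom_unique h1.2.1 ?_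
      rw [hbeq, ht]
      exact h2.2.1
    exact beta_unique hpht h1.1 (by rw [hα]; exact h2.1) hdom
  -- the amalgam is a condition
  have hmain : IsCond κ (amalg p q) := by
    refine ⟨hpa, hpb, hpht, hpk, hpkmono, ?_, ?_, ?_, ?_, ?_⟩
    · -- (d) bound
      rintro γ (hγ | hγ)
      · exact hpU γ hγ
      · exact hqU γ hγ
    · -- (d) cardinality
      refine (Cardinal.mk_union_le p.U q.U).trans ?_
      refine le_trans (add_le_add hpUcard hqUcard) ?_
      rw [Cardinal.add_eq_self (Cardinal.aleph0_le_aleph 1)]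
    · -- (e)
      intro γ hγ
      by_cases hγp : γ ∈ p.U
      · rw [hrb γ hγp, hrβ γ hγp]
        exact hpe γ hγp
      · have hγq : γ ∈ q.U := hγ.resolve_left hγp
        rw [hrb' γ hγp, hrβ' γ hγp]
        obtain ⟨he1, he2, he3, he4⟩ := hqe γ hγq
        refine ⟨show q.β γ ≤ p.α by rw [hα]; exact he1,
          show IsFunGraph (q.b γ) (restrictTree p.t (q.β γ + 1)) by rw [ht]; exact he2, ?_, he4⟩
        intro x y hxy
        have hxt : x ∈ q.t := (he2.1 (x, y) hxy).1
        show y ∈ level (p.k x) (nodeHt x)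
        rw [hk x (by rw [ht]; exact hxt)]
        exact he3 x y hxy
    · -- (f)
      intro γ hγ
      by_cases hγp : γ ∈ p.U
      · rw [hrf γ hγp, hrδ γ hγp]
        exact hpf γ hγp
      · have hγq : γ ∈ q.U := hγ.resolve_left hγp
        rw [hrf' γ hγp, hrδ' γ hγp]
        obtain ⟨he1, he2, he3⟩ := hqf γ hγq
        exact ⟨show q.δ γ ≤ p.α by rw [hα]; exact he1, he2, he3⟩
    · -- (g)
      intro x hx U₀ hU₀sub hU₀fin ε hε1 hε2
      have trans : ∀ γ : ONat, ∃ γ', γ ∈ U₀ →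
          γ' ∈ p.U ∧ p.b γ' = (amalg p q).b γ ∧ p.β γ' = (amalg p q).β γ := by
        intro γ
        by_cases hγp : γ ∈ p.U
        · exact ⟨γ, fun _ => ⟨hγp, (hrb γ hγp).symm, (hrβ γ hγp).symm⟩⟩
        · by_cases hγ0 : γ ∈ U₀
          · have hγq : γ ∈ q.U \ p.U := ⟨(hU₀sub hγ0).resolve_left hγp, hγp⟩
            obtain ⟨γ', h1, h2, h3⟩ := hbβ γ hγq
            exact ⟨γ', fun _ => ⟨h1, by rw [h2, hrb' γ hγp], by rw [h3, hrβ' γ hγp]⟩⟩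
          · exact ⟨0, fun h => absurd h hγ0⟩
      choose g hg using trans
      obtain ⟨x', hx'lvl, hxx', hsep⟩ :=
        hpg x hx (g '' U₀) (by rintro _ ⟨γ, hγ, rfl⟩; exact (hg γ hγ).1)
          (hU₀fin.image g) ε hε1 hε2
      refine ⟨x', hx'lvl, hxx', ?_⟩
      intro γ₁ hγ₁ γ₂ hγ₂
      obtain ⟨-, hb1, hβ1⟩ := hg γ₁ hγ₁
      obtain ⟨-, hb2, hβ2⟩ := hg γ₂ hγ₂
      rcases hsep (g γ₁) ⟨γ₁, hγ₁, rfl⟩ (g γ₂) ⟨γ₂, hγ₂, rfl⟩ with h | h | h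
      · left; rwa [hβ1] at h
      · right; left; rwa [hβ2] at h
      · right; right
        intro y₁ y₂ y₁' y₂' m1 m2 m3 m4 heq
        exact h y₁ y₂ y₁' y₂' (by rw [hb1]; exact m1) (by rw [hb2]; exact m2)
          (by rw [hb1]; exact m3) (by rw [hb2]; exact m4) heq
  -- r ≤ p
  have hlp : le (amalg p q) p := by
    refine ⟨le_refl _, endExtends_self htree, fun x _ => rfl, Set.subset_union_left,
      ?_, ?_, ?_⟩
    · intro γ hγ
      exact ⟨(hrb γ hγ).symm.subset, (hrf γ hγ).symm.subset⟩
    · refine Set.Countable.mono ?_ Set.countable_empty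
      rintro γ ⟨h1, h2⟩
      rw [hrβ γ h1] at h2
      exact absurd h2 (lt_irrefl _)
    · refine Set.Countable.mono ?_ Set.countable_empty
      rintro γ ⟨h1, h2⟩
      rw [hrδ γ h1] at h2
      exact absurd h2 (lt_irrefl _)
  -- r ≤ q
  have hlq : le (amalg p q) q := by
    refine ⟨hα.ge, ?_, ?_, Set.subset_union_right, ?_, ?_, ?_⟩
    · show EndExtends q.t p.t
      rw [← ht]
      exact endExtends_self htree
    · intro x hx
      show p.k x = q.k x
      exact hk x (by rw [ht]; exact hx)
    · intro γ hγ
      by_cases hγp : γ ∈ p.U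
      · obtain ⟨e1, -, e3, -⟩ := hbf γ ⟨hγp, hγ⟩
        exact ⟨by rw [hrb γ hγp, ← e1], by rw [hrf γ hγp, ← e3]⟩
      · exact ⟨(hrb' γ hγp).symm.subset, (hrf' γ hγp).symm.subset⟩
    · refine Set.Countable.mono ?_ Set.countable_empty
      rintro γ ⟨h1, h2⟩
      by_cases hγp : γ ∈ p.U
      · rw [hrβ γ hγp, ← (hbf γ ⟨hγp, h1⟩).2.1] at h2
        exact absurd h2 (lt_irrefl _)
      · rw [hrβ' γ hγp] at h2
        exact absurd h2 (lt_irrefl _)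
    · refine Set.Countable.mono ?_ Set.countable_empty
      rintro γ ⟨h1, h2⟩
      by_cases hγp : γ ∈ p.U
      · rw [hrδ γ hγp, ← (hbf γ ⟨hγp, h1⟩).2.2.2] at h2
        exact absurd h2 (lt_irrefl _)
      · rw [hrδ' γ hγp] at h2
        exact absurd h2 (lt_irrefl _)
  exact ⟨hmain, hlp, hlq, amalg p q, hmain, hlp, hlq⟩


end JinShelah563
end
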